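/- arXiv:2303.01270 — 4 statements merged into one kernel-verified Lean document; each statement's English description precedes it below -/
import Mathlib

section
/- Let L ⊆ S and 0 ≤ κ ≤ κ' < 1. Then ρ^L_κ ≤ ρ^L_{κ'}, i.e., the spectral radius of the (L,κ)-lazy version of P is non-decreasing in κ. -/
open scoped Classical ENNReal NNReal

variable {S : Type*}

/-- The `n`-step transition probabilities `P^n(x,y)` (n-th matrix power of `P`). -/
noncomputable def kpow (P : S → S → ℝ) : ℕ → S → S → ℝ
  | 0, x, y => if x = y then 1 else 0
  | n+1, x, y => ∑' w, P x w * kpow P n w y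

/-- `P` is a transition probability: nonnegative entries and each row sums to `1`. -/
def IsTransProb (P : S → S → ℝ) : Prop :=
  (∀ x y, 0 ≤ P x y) ∧ ∀ x, HasSum (P x) 1

/-- `P` is irreducible: for all `x, y` there is `n ≥ 0` with `P^n(x,y) > 0`. -/
def Irred (P : S → S → ℝ) : Prop :=
  ∀ x y, ∃ n, 0 < kpow P n x y

/-- The Green function `G(x,y|z) = ∑_{n ≥ 0} P^n(x,y) zⁿ`, a sum in `[0,∞]`. -/
noncomputable def green (P : S → S → ℝ) (x y : S) (z : ℝ) : ℝ≥0∞ :=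
  ∑' n, ENNReal.ofReal (kpow P n x y * z ^ n)

/-- Radius of convergence of the power series with coefficients `a`,
as the supremum (in `[0,∞]`) of the nonnegative `z` at which the series converges. -/
noncomputable def convRadius (a : ℕ → ℝ) : ℝ≥0∞ :=
  ⨆ (z : ℝ≥0) (_ : Summable fun n => a n * (z : ℝ) ^ n), (z : ℝ≥0∞)

/-- The spectral radius as an extended nonnegative real: the reciprocal of the
radius of convergence of `G(x,x|·)` (independent of `x` when `P` is irreducible). -/
noncomputable def specRadiusE (P : S → S → ℝ) : ℝ≥0∞ :=
  ⨆ x, (convRadius fun n => kpow P n x x)⁻¹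

/-- The spectral radius `ρ` of `P`. -/
noncomputable def specRadius (P : S → S → ℝ) : ℝ :=
  (specRadiusE P).toReal

/-- The `(L,κ)`-lazy version `P^L_κ` of `P`:
`P^L_κ(x,y) = κ·1_{x=y} + (1-κ)P(x,y)` for `x ∈ L`, and `P^L_κ(x,y) = P(x,y)` for `x ∉ L`. -/
noncomputable def lazy (P : S → S → ℝ) (L : Set S) (κ : ℝ) : S → S → ℝ :=
  fun x y => if x ∈ L then (if x = y then κ else 0) + (1 - κ) * P x y else P x y

/-- First-return probabilities: `u_0(x,y) = 0`, `u_1(x,y) = P(x,y)`, and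
`u_n(x,y) = ∑_{w ≠ y} P(x,w) u_{n-1}(w,y)` for `n ≥ 2`. -/
noncomputable def fret (P : S → S → ℝ) : ℕ → S → S → ℝ
  | 0, _, _ => 0
  | 1, x, y => P x y
  | n+2, x, y => ∑' w, if w = y then 0 else P x w * fret P (n+1) w y

/-- The U-function `U(x,y|z) = ∑_{n ≥ 0} u_n(x,y) zⁿ`, a sum in `[0,∞]`. -/
noncomputable def Ufun (P : S → S → ℝ) (x y : S) (z : ℝ) : ℝ≥0∞ :=
  ∑' n, ENNReal.ofReal (fret P n x y * z ^ n)

/-- `r(U|x,y)`, the radius of convergence of `U(x,y|·)`. -/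
noncomputable def rU (P : S → S → ℝ) (x y : S) : ℝ≥0∞ :=
  convRadius fun n => fret P n x y

/-- `P` is rho-recurrent if `G(x,x|1/ρ) = ∞` (for all, equivalently some, `x`). -/
def RhoRecurrent (P : S → S → ℝ) : Prop :=
  ∀ x, green P x x (specRadius P)⁻¹ = ∞

/-- `P` is rho-transient if `G(x,x|1/ρ) < ∞` (for all, equivalently some, `x`). -/
def RhoTransient (P : S → S → ℝ) : Prop :=
  ∀ x, green P x x (specRadius P)⁻¹ ≠ ∞

/-- A rho-recurrent `P` is strictly rho-recurrent if `r(U|x,x) > 1/ρ` for some `x`. -/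
def StrictlyRhoRecurrent (P : S → S → ℝ) : Prop :=
  RhoRecurrent P ∧ ∃ x, ENNReal.ofReal (specRadius P)⁻¹ < rU P x x

/-- A rho-recurrent `P` is critically rho-recurrent if `r(U|x,x) = 1/ρ` for all `x`. -/
def CriticallyRhoRecurrent (P : S → S → ℝ) : Prop :=
  RhoRecurrent P ∧ ∀ x, rU P x x = ENNReal.ofReal (specRadius P)⁻¹

/-!
Fix a base point `o` and `ρ(P^L_{κ'}) < t ≤ 1`. The Green function `h = G_{κ'}(·, o | 1/t)` is
finite at `o` and `t`-superharmonic for `P^L_{κ'}`. At `x ∈ L` the inequality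
`κ' h(x) + (1 - κ') Ph(x) ≤ t h(x) ≤ h(x)` forces `Ph(x) ≤ h(x)`, so lowering the holding
probability to `κ` keeps `h` `t`-superharmonic; off `L` the two kernels agree. Iterating gives
`P_κ^n(o,o) h(o) ≤ tⁿ h(o)`, hence `ρ(P^L_κ) ≤ t`. All sums are taken in `[0,∞]`, so `h` may be
infinite away from `o`.
-/

section Kpow

variable {Q : S → S → ℝ}

lemma kpow_mem_Icc (hQ : IsTransProb Q) (n : ℕ) (x y : S) : kpow Q n x y ∈ Set.Icc 0 1 := by
  induction n generalizing x with
  | zero => simp only [kpow]; split_ifs <;> simp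
  | succ n ih =>
    have hnn (w : S) : 0 ≤ Q x w * kpow Q n w y := mul_nonneg (hQ.1 x w) (ih w).1
    have hle (w : S) : Q x w * kpow Q n w y ≤ Q x w := mul_le_of_le_one_right (hQ.1 x w) (ih w).2
    refine ⟨tsum_nonneg hnn, ?_⟩
    calc kpow Q (n + 1) x y = ∑' w, Q x w * kpow Q n w y := rfl
      _ ≤ ∑' w, Q x w :=
        Summable.tsum_le_tsum hle (.of_nonneg_of_le hnn hle (hQ.2 x).summable) (hQ.2 x).summable
      _ = 1 := (hQ.2 x).tsum_eq

lemma ofReal_kpow_succ (hQ : IsTransProb Q) (n : ℕ) (x y : S) :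
    ENNReal.ofReal (kpow Q (n + 1) x y)
      = ∑' w, ENNReal.ofReal (Q x w) * ENNReal.ofReal (kpow Q n w y) := by
  have hnn (w : S) : 0 ≤ Q x w * kpow Q n w y := mul_nonneg (hQ.1 x w) (kpow_mem_Icc hQ n w y).1
  have hle (w : S) : Q x w * kpow Q n w y ≤ Q x w :=
    mul_le_of_le_one_right (hQ.1 x w) (kpow_mem_Icc hQ n w y).2
  rw [show kpow Q (n + 1) x y = ∑' w, Q x w * kpow Q n w y from rfl,
    ENNReal.ofReal_tsum_of_nonneg hnn (.of_nonneg_of_le hnn hle (hQ.2 x).summable)]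
  exact tsum_congr fun w => ENNReal.ofReal_mul (hQ.1 x w)

end Kpow

def IsSuperharmonic (Q : S → S → ℝ) (t : ℝ≥0∞) (h : S → ℝ≥0∞) : Prop :=
  ∀ x, ∑' y, ENNReal.ofReal (Q x y) * h y ≤ t * h x

namespace IsSuperharmonic

variable {Q : S → S → ℝ} {t : ℝ≥0∞} {h : S → ℝ≥0∞}

lemma tsum_ofReal_kpow_mul_le (hQ : IsTransProb Q) (hh : IsSuperharmonic Q t h) (n : ℕ) (x : S) :
    ∑' y, ENNReal.ofReal (kpow Q n x y) * h y ≤ t ^ n * h x := by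
  induction n generalizing x with
  | zero =>
    rw [tsum_eq_single x fun y hy => by simp [kpow, Ne.symm hy]]
    simp [kpow]
  | succ n ih =>
    calc ∑' y, ENNReal.ofReal (kpow Q (n + 1) x y) * h y
        = ∑' w, ENNReal.ofReal (Q x w) * ∑' y, ENNReal.ofReal (kpow Q n w y) * h y := by
          simp_rw [ofReal_kpow_succ hQ, ← ENNReal.tsum_mul_right, ← ENNReal.tsum_mul_left,
            mul_assoc]
          exact ENNReal.tsum_comm
      _ ≤ ∑' w, ENNReal.ofReal (Q x w) * (t ^ n * h w) := by gcongr with w; exact ih w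
      _ = t ^ n * ∑' w, ENNReal.ofReal (Q x w) * h w := by
          rw [← ENNReal.tsum_mul_left]
          exact tsum_congr fun w => mul_left_comm _ _ _
      _ ≤ t ^ n * (t * h x) := by gcongr; exact hh x
      _ = t ^ (n + 1) * h x := by ring

lemma ofReal_kpow_self_le (hQ : IsTransProb Q) (hh : IsSuperharmonic Q t h) {x : S}
    (h0 : h x ≠ 0) (htop : h x ≠ ∞) (n : ℕ) : ENNReal.ofReal (kpow Q n x x) ≤ t ^ n :=
  (ENNReal.mul_le_mul_iff_left h0 htop).mp
    ((ENNReal.le_tsum x).trans (hh.tsum_ofReal_kpow_mul_le hQ n x))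

end IsSuperharmonic

section ConvRadius

variable {a : ℕ → ℝ}

lemma summable_of_lt_convRadius (ha : ∀ n, 0 ≤ a n) {z : ℝ≥0} (hz : z < convRadius a) :
    Summable fun n => a n * (z : ℝ) ^ n := by
  obtain ⟨w, hw⟩ := lt_iSup_iff.mp hz
  obtain ⟨hsum, hzw⟩ := lt_iSup_iff.mp hw
  refine hsum.of_nonneg_of_le (fun n => by have := ha n; positivity) fun n => ?_
  have hzw : (z : ℝ) ≤ w := by exact_mod_cast hzw.le
  gcongr
  exact ha n

lemma inv_convRadius_le (ha : ∀ n, 0 ≤ a n) {t : ℝ≥0} (hat : ∀ n, a n ≤ t ^ n) :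
    (convRadius a)⁻¹ ≤ t := by
  rw [ENNReal.inv_le_iff_inv_le]
  refine ENNReal.le_of_forall_nnreal_lt fun r hr => le_iSup₂_of_le r ?_ le_rfl
  have hrt : (r : ℝ) * t < 1 := by
    have : ((r * t : ℝ≥0) : ℝ≥0∞) < 1 := by
      rw [ENNReal.coe_mul]
      exact ENNReal.mul_lt_of_lt_div (by rwa [one_div])
    exact_mod_cast this
  refine (summable_geometric_of_lt_one (by positivity) hrt).of_nonneg_of_le
    (fun n => by have := ha n; positivity) fun n => ?_
  rw [mul_pow, mul_comm]
  gcongr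
  exact hat n

end ConvRadius

section Green

variable {Q : S → S → ℝ}

lemma green_eq_tsum (hQ : IsTransProb Q) (x y : S) (z : ℝ≥0) :
    green Q x y z = ∑' n, ENNReal.ofReal (kpow Q n x y) * (z : ℝ≥0∞) ^ n :=
  tsum_congr fun n => by
    rw [ENNReal.ofReal_mul (kpow_mem_Icc hQ n x y).1, ← NNReal.coe_pow, ENNReal.ofReal_coe_nnreal,
      ENNReal.coe_pow]

lemma isSuperharmonic_green (hQ : IsTransProb Q) {t : ℝ≥0} (ht : t ≠ 0) (o : S) :
    IsSuperharmonic Q t fun x => green Q x o (t⁻¹ : ℝ≥0) := by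
  intro x
  have hζ (n : ℕ) : ((t⁻¹ : ℝ≥0) : ℝ≥0∞) ^ n = t * ((t⁻¹ : ℝ≥0) : ℝ≥0∞) ^ (n + 1) := by
    rw [← ENNReal.coe_pow, ← ENNReal.coe_pow, ← ENNReal.coe_mul, pow_succ', ← mul_assoc,
      mul_inv_cancel₀ ht, one_mul]
  calc ∑' y, ENNReal.ofReal (Q x y) * green Q y o (t⁻¹ : ℝ≥0)
      = ∑' n, ENNReal.ofReal (kpow Q (n + 1) x o) * ((t⁻¹ : ℝ≥0) : ℝ≥0∞) ^ n := by
        simp_rw [green_eq_tsum hQ, ← ENNReal.tsum_mul_left, ofReal_kpow_succ hQ,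
          ← ENNReal.tsum_mul_right, mul_assoc]
        exact ENNReal.tsum_comm
    _ = t * ∑' n, ENNReal.ofReal (kpow Q (n + 1) x o) * ((t⁻¹ : ℝ≥0) : ℝ≥0∞) ^ (n + 1) := by
        rw [← ENNReal.tsum_mul_left]
        exact tsum_congr fun n => by rw [hζ, mul_left_comm]
    _ ≤ t * green Q x o (t⁻¹ : ℝ≥0) := by
        rw [green_eq_tsum hQ]
        gcongr (t : ℝ≥0∞) * ?_
        exact ENNReal.tsum_comp_le_tsum_of_injective (add_left_injective 1)
          fun n => ENNReal.ofReal (kpow Q n x o) * ((t⁻¹ : ℝ≥0) : ℝ≥0∞) ^ n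

lemma green_self_ne_zero (x : S) (z : ℝ) : green Q x x z ≠ 0 :=
  ne_of_gt (lt_of_lt_of_le (by simp [kpow]) (ENNReal.le_tsum 0))

lemma green_self_ne_top (hQ : IsTransProb Q) {x : S} {z : ℝ≥0}
    (hz : z < convRadius fun n => kpow Q n x x) : green Q x x z ≠ ∞ := by
  have hnn (n : ℕ) : 0 ≤ kpow Q n x x * (z : ℝ) ^ n :=
    mul_nonneg (kpow_mem_Icc hQ n x x).1 (by positivity)
  rw [green, ← ENNReal.ofReal_tsum_of_nonneg hnn
    (summable_of_lt_convRadius (fun n => (kpow_mem_Icc hQ n x x).1) hz)]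
  exact ENNReal.ofReal_ne_top

end Green

lemma specRadiusE_le_one {Q : S → S → ℝ} (hQ : IsTransProb Q) : specRadiusE Q ≤ 1 :=
  iSup_le fun x => by
    simpa using inv_convRadius_le (t := 1) (fun n => (kpow_mem_Icc hQ n x x).1)
      fun n => by simpa using (kpow_mem_Icc hQ n x x).2

/-- The hypothesis forces `b ≤ a`, and then the mixture is nondecreasing in the weight on `a`. -/
lemma ofReal_mul_add_ofReal_one_sub_mul_mono {a b : ℝ≥0∞} {p q : ℝ} (hp : 0 ≤ p) (hpq : p ≤ q)
    (hq : q < 1) (hqa : ENNReal.ofReal q * a + ENNReal.ofReal (1 - q) * b ≤ a) :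
    ENNReal.ofReal p * a + ENNReal.ofReal (1 - p) * b
      ≤ ENNReal.ofReal q * a + ENNReal.ofReal (1 - q) * b := by
  have hsplit_q : ENNReal.ofReal q = ENNReal.ofReal p + ENNReal.ofReal (q - p) := by
    rw [← ENNReal.ofReal_add hp (by linarith)]; ring_nf
  have hsplit_p : ENNReal.ofReal (1 - p) = ENNReal.ofReal (q - p) + ENNReal.ofReal (1 - q) := by
    rw [← ENNReal.ofReal_add (by linarith) (by linarith)]; ring_nf
  have hba : b ≤ a := by
    rcases eq_or_ne a ∞ with rfl | ha
    · exact le_top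
    have hqa' : ENNReal.ofReal q * a + ENNReal.ofReal (1 - q) * b
        ≤ ENNReal.ofReal q * a + ENNReal.ofReal (1 - q) * a := by
      rwa [← add_mul, ← ENNReal.ofReal_add (by linarith) (by linarith), add_sub_cancel,
        ENNReal.ofReal_one, one_mul]
    rw [ENNReal.add_le_add_iff_left (ENNReal.mul_ne_top ENNReal.ofReal_ne_top ha), mul_comm,
      mul_comm _ a, ENNReal.mul_le_mul_iff_left (by simpa using hq) ENNReal.ofReal_ne_top] at hqa'
    exact hqa'
  calc ENNReal.ofReal p * a + ENNReal.ofReal (1 - p) * b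
      = ENNReal.ofReal p * a + ENNReal.ofReal (q - p) * b + ENNReal.ofReal (1 - q) * b := by
        rw [hsplit_p, add_mul, add_assoc]
    _ ≤ ENNReal.ofReal p * a + ENNReal.ofReal (q - p) * a + ENNReal.ofReal (1 - q) * b := by
        gcongr
    _ = ENNReal.ofReal q * a + ENNReal.ofReal (1 - q) * b := by rw [hsplit_q, add_mul]

section Lazy

variable {P : S → S → ℝ} {L : Set S} {κ κ' : ℝ}

lemma lazy_isTransProb (hP : IsTransProb P) (hκ0 : 0 ≤ κ) (hκ1 : κ ≤ 1) :
    IsTransProb (lazy P L κ) := by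
  refine ⟨fun x y => ?_, fun x => ?_⟩
  · unfold lazy
    split_ifs
    · exact add_nonneg hκ0 (mul_nonneg (by linarith) (hP.1 x y))
    · exact add_nonneg le_rfl (mul_nonneg (by linarith) (hP.1 x y))
    · exact hP.1 x y
  by_cases hx : x ∈ L
  · have hsum := (hasSum_ite_eq x κ).add ((hP.2 x).mul_left (1 - κ))
    rw [mul_one, add_sub_cancel] at hsum
    refine hsum.congr_fun fun y => ?_
    simp [lazy, hx, eq_comm]
  · refine (hP.2 x).congr_fun fun y => ?_
    simp [lazy, hx]

lemma tsum_ofReal_lazy_mul_of_mem (hP : IsTransProb P) (hκ0 : 0 ≤ κ) (hκ1 : κ ≤ 1) {x : S}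
    (hx : x ∈ L) (h : S → ℝ≥0∞) :
    ∑' y, ENNReal.ofReal (lazy P L κ x y) * h y
      = ENNReal.ofReal κ * h x + ENNReal.ofReal (1 - κ) * ∑' y, ENNReal.ofReal (P x y) * h y := by
  have hrow (y : S) : ENNReal.ofReal (lazy P L κ x y)
      = (if x = y then ENNReal.ofReal κ else 0)
        + ENNReal.ofReal (1 - κ) * ENNReal.ofReal (P x y) := by
    rw [lazy, if_pos hx, ENNReal.ofReal_add (by split_ifs <;> simp [hκ0])
      (mul_nonneg (by linarith) (hP.1 x y)), ENNReal.ofReal_mul (by linarith)]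
    split_ifs <;> simp
  simp_rw [hrow, add_mul, ENNReal.tsum_add, ite_mul, zero_mul, mul_assoc, ENNReal.tsum_mul_left]
  rw [tsum_eq_single x fun y hy => if_neg (Ne.symm hy), if_pos rfl]

lemma IsSuperharmonic.lazy_of_le (hP : IsTransProb P) (hκ0 : 0 ≤ κ) (hκκ' : κ ≤ κ')
    (hκ'1 : κ' < 1) {t : ℝ≥0∞} (ht : t ≤ 1) {h : S → ℝ≥0∞}
    (hh : IsSuperharmonic (lazy P L κ') t h) : IsSuperharmonic (lazy P L κ) t h := by
  intro x
  by_cases hx : x ∈ L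
  · have hx' := hh x
    rw [tsum_ofReal_lazy_mul_of_mem hP (hκ0.trans hκκ') hκ'1.le hx] at hx'
    rw [tsum_ofReal_lazy_mul_of_mem hP hκ0 (hκκ'.trans hκ'1.le) hx]
    exact (ofReal_mul_add_ofReal_one_sub_mul_mono hκ0 hκκ' hκ'1
      (hx'.trans (mul_le_of_le_one_left' ht))).trans hx'
  · simpa only [lazy, if_neg hx] using hh x

lemma specRadiusE_lazy_mono (hP : IsTransProb P) (hκ0 : 0 ≤ κ) (hκκ' : κ ≤ κ')
    (hκ'1 : κ' < 1) : specRadiusE (lazy P L κ) ≤ specRadiusE (lazy P L κ') := by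
  have hQ := lazy_isTransProb (L := L) hP hκ0 (hκκ'.trans hκ'1.le)
  have hQ' := lazy_isTransProb (L := L) hP (hκ0.trans hκκ') hκ'1.le
  refine iSup_le fun o => le_of_forall_gt_imp_ge_of_dense fun t ht => ?_
  rcases le_or_gt 1 t with ht1 | ht1
  · exact (le_iSup (fun x => (convRadius fun n => kpow (lazy P L κ) n x x)⁻¹) o).trans
      ((specRadiusE_le_one hQ).trans ht1)
  lift t to ℝ≥0 using ht1.ne_top
  have ht0 : t ≠ 0 := by rintro rfl; simp at ht
  have hconv : ((t⁻¹ : ℝ≥0) : ℝ≥0∞) < convRadius fun n => kpow (lazy P L κ') n o o := by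
    rw [ENNReal.coe_inv ht0, ENNReal.inv_lt_iff_inv_lt]
    exact (le_iSup (fun x => (convRadius fun n => kpow (lazy P L κ') n x x)⁻¹) o).trans_lt ht
  have hh := (isSuperharmonic_green hQ' ht0 o).lazy_of_le hP hκ0 hκκ' hκ'1 ht1.le
  refine inv_convRadius_le (fun n => (kpow_mem_Icc hQ n o o).1) fun n => ?_
  have hn := hh.ofReal_kpow_self_le hQ (green_self_ne_zero o _) (green_self_ne_top hQ' hconv) n
  rwa [← ENNReal.coe_pow, ← ENNReal.ofReal_coe_nnreal, ENNReal.ofReal_le_ofReal_iff (by positivity),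
    NNReal.coe_pow] at hn

end Lazy

theorem lazy_specRadius_mono_general {S : Type*} (P : S → S → ℝ)
    (hP : IsTransProb P)
    (L : Set S) (κ κ' : ℝ) (hκ0 : 0 ≤ κ) (hκκ' : κ ≤ κ') (hκ'1 : κ' < 1) :
    specRadius (lazy P L κ) ≤ specRadius (lazy P L κ') :=
  ENNReal.toReal_mono
    (ne_top_of_le_ne_top ENNReal.one_ne_top
      (specRadiusE_le_one (lazy_isTransProb hP (hκ0.trans hκκ') hκ'1.le)))
    (specRadiusE_lazy_mono hP hκ0 hκκ' hκ'1)

theorem lazy_specRadius_mono {S : Type*} [Countable S] [Infinite S] (P : S → S → ℝ)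
    (hP : IsTransProb P) (hirr : Irred P)
    (L : Set S) (κ κ' : ℝ) (hκ0 : 0 ≤ κ) (hκκ' : κ ≤ κ') (hκ'1 : κ' < 1) :
    specRadius (lazy P L κ) ≤ specRadius (lazy P L κ') :=
  lazy_specRadius_mono_general P hP L κ κ' hκ0 hκκ' hκ'1
end

section
/- For every L ⊆ S, the map κ ↦ ρ^L_κ is continuous on [0,1). -/
open scoped Classical ENNReal NNReal

variable {S : Type*}

/-!
Making a chain lazier is again a lazy modification: `(P^L_κ)^L_μ = P^L_{κ'}` with
`μ = (κ' - κ)/(1 - κ)`. So it suffices to compare `ρ(P^L_μ)` with `ρ(P)` for small `μ`,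
and indeed `(1 - μ) ρ(P) ≤ ρ(P^L_μ) ≤ ρ(P) + μ`. Both bounds come from comparing matrix
powers entrywise: `(1 - μ)ⁿ Pⁿ ≤ (P^L_μ)ⁿ` on one side, and on the other `P^L_μ ≤ μ I + P`,
whose powers satisfy `(μ I + P)ⁿ(x,y) ≤ (μ + 1/t)ⁿ G(x,y|t)` because
`t · P G(·,y|t) ≤ G(·,y|t)`. Hence `|ρ^L_{κ'} - ρ^L_κ| ≤ (κ' - κ)/(1 - κ)`, and ρ^L_κ is
continuous in `κ ∈ [0,1)`.
-/

noncomputable def radiusE (a : ℕ → ℝ≥0∞) : ℝ≥0∞ :=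
  ⨆ (z : ℝ≥0) (_ : ∑' n, a n * (z : ℝ≥0∞) ^ n ≠ ∞), (z : ℝ≥0∞)

section radiusE

variable {a b : ℕ → ℝ≥0∞}

lemma le_radiusE {z : ℝ≥0} (h : ∑' n, a n * (z : ℝ≥0∞) ^ n ≠ ∞) :
    (z : ℝ≥0∞) ≤ radiusE a :=
  le_iSup₂ (f := fun (z : ℝ≥0) (_ : ∑' n, a n * (z : ℝ≥0∞) ^ n ≠ ∞) => (z : ℝ≥0∞)) z h

lemma convRadius_eq_radiusE {a : ℕ → ℝ} (ha : ∀ n, 0 ≤ a n) :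
    convRadius a = radiusE fun n => ENNReal.ofReal (a n) := by
  refine iSup_congr fun z => ?_
  have hterm (n : ℕ) :
      ENNReal.ofReal (a n * (z : ℝ) ^ n) = ENNReal.ofReal (a n) * (z : ℝ≥0∞) ^ n := by
    rw [ENNReal.ofReal_mul (ha n), ENNReal.ofReal_pow z.coe_nonneg, ENNReal.ofReal_coe_nnreal]
  have hsummable : (Summable fun n => a n * (z : ℝ) ^ n) ↔
      ∑' n, ENNReal.ofReal (a n) * (z : ℝ≥0∞) ^ n ≠ ∞ := by
    simp_rw [← hterm]
    refine ⟨Summable.tsum_ofReal_ne_top, fun h => ?_⟩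
    refine (ENNReal.summable_toReal h).congr fun n => ?_
    exact ENNReal.toReal_ofReal (mul_nonneg (ha n) (pow_nonneg z.2 n))
  rw [hsummable]

lemma one_le_radiusE (ha : ∀ n, a n ≤ 1) : 1 ≤ radiusE a := by
  refine ENNReal.le_of_forall_nnreal_lt fun z hz => le_radiusE ?_
  refine ne_top_of_le_ne_top ?_ (ENNReal.tsum_le_tsum fun n => mul_le_of_le_one_left' (ha n))
  rwa [ENNReal.tsum_geometric, Ne, ENNReal.inv_eq_top, tsub_eq_zero_iff_le, not_le]

lemma mul_radiusE_le {c : ℝ≥0∞} (hc : c ≠ ∞) (h : ∀ n, c ^ n * a n ≤ b n) :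
    c * radiusE b ≤ radiusE a := by
  lift c to ℝ≥0 using hc
  rw [radiusE, ENNReal.mul_iSup]
  refine iSup_le fun z => ?_
  rw [ENNReal.mul_iSup]
  refine iSup_le fun hz => ?_
  rw [← ENNReal.coe_mul]
  refine le_radiusE (ne_top_of_le_ne_top hz (ENNReal.tsum_le_tsum fun n => ?_))
  calc a n * ((c * z : ℝ≥0) : ℝ≥0∞) ^ n = (c : ℝ≥0∞) ^ n * a n * (z : ℝ≥0∞) ^ n := by
        push_cast; ring
    _ ≤ b n * (z : ℝ≥0∞) ^ n := by gcongr; exact h n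

lemma mul_inv_radiusE_le {c : ℝ≥0∞} (hc : c ≠ ∞) (h : ∀ n, c ^ n * a n ≤ b n) :
    c * (radiusE a)⁻¹ ≤ (radiusE b)⁻¹ := by
  rcases eq_or_ne c 0 with rfl | hc0
  · simp
  have hb := (ENNReal.mul_le_iff_le_inv hc0 hc).1 (mul_radiusE_le hc h)
  calc c * (radiusE a)⁻¹ = (c⁻¹ * radiusE a)⁻¹ := by
        rw [ENNReal.mul_inv (.inl (ENNReal.inv_ne_zero.2 hc)) (.inl (ENNReal.inv_ne_top.2 hc0)),
          inv_inv]
    _ ≤ (radiusE b)⁻¹ := ENNReal.inv_le_inv.2 hb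

lemma inv_radiusE_le_add {μ : ℝ≥0∞}
    (h : ∀ t : ℝ≥0, t ≠ 0 → ∑' n, a n * (t : ℝ≥0∞) ^ n ≠ ∞ →
      ∃ C ≠ ∞, ∀ n, b n ≤ (μ + (t : ℝ≥0∞)⁻¹) ^ n * C) :
    (radiusE b)⁻¹ ≤ (radiusE a)⁻¹ + μ := by
  have hinf : (radiusE a)⁻¹ + μ =
      ⨅ (t : ℝ≥0) (_ : ∑' n, a n * (t : ℝ≥0∞) ^ n ≠ ∞), ((t : ℝ≥0∞)⁻¹ + μ) := by
    simp only [radiusE, ENNReal.inv_iSup, ENNReal.iInf_add]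
  rw [hinf]
  refine le_iInf₂ fun t ht => ?_
  rcases eq_or_ne t 0 with rfl | ht0
  · simp
  obtain ⟨C, hC, hb⟩ := h t ht0 ht
  rw [ENNReal.inv_le_iff_inv_le]
  refine ENNReal.le_of_forall_nnreal_lt fun z hz => le_radiusE (ne_of_lt ?_)
  have hq : (μ + (t : ℝ≥0∞)⁻¹) * z < 1 :=
    ENNReal.mul_lt_of_lt_div' (by rwa [one_div, add_comm])
  calc ∑' n, b n * (z : ℝ≥0∞) ^ n ≤ ∑' n, C * ((μ + (t : ℝ≥0∞)⁻¹) * z) ^ n :=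
        ENNReal.tsum_le_tsum fun n =>
          (mul_le_mul_left (hb n) _).trans_eq (by rw [mul_pow]; ring)
    _ = C * (1 - (μ + (t : ℝ≥0∞)⁻¹) * z)⁻¹ := by
        rw [ENNReal.tsum_mul_left, ENNReal.tsum_geometric]
    _ < ∞ := ENNReal.mul_lt_top hC.lt_top (ENNReal.inv_lt_top.2 (tsub_pos_of_lt hq))

end radiusE

noncomputable def kpowE (Q : S → S → ℝ≥0∞) : ℕ → S → S → ℝ≥0∞
  | 0, x, y => if x = y then 1 else 0
  | n+1, x, y => ∑' w, Q x w * kpowE Q n w y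

noncomputable def greenE (Q : S → S → ℝ≥0∞) (x y : S) (t : ℝ≥0∞) : ℝ≥0∞ :=
  ∑' n, kpowE Q n x y * t ^ n

lemma greenE_eq_add (Q : S → S → ℝ≥0∞) (x y : S) (t : ℝ≥0∞) :
    greenE Q x y t = (if x = y then 1 else 0) + t * ∑' w, Q x w * greenE Q w y t := by
  rw [greenE, tsum_eq_zero_add' ENNReal.summable]
  congr 1
  · simp [kpowE]
  · simp_rw [greenE, kpowE, ← ENNReal.tsum_mul_left, ← ENNReal.tsum_mul_right]
    rw [ENNReal.tsum_comm]
    exact tsum_congr fun w => tsum_congr fun n => by ring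

section kpowE

variable {Q Q' : S → S → ℝ≥0∞}

lemma mul_pow_kpowE_le {c : ℝ≥0∞} (hQ : ∀ x y, c * Q x y ≤ Q' x y) :
    ∀ n x y, c ^ n * kpowE Q n x y ≤ kpowE Q' n x y
  | 0, x, y => by simp [kpowE]
  | n+1, x, y =>
    calc c ^ (n+1) * kpowE Q (n+1) x y = ∑' w, c * Q x w * (c ^ n * kpowE Q n w y) := by
          rw [kpowE, ← ENNReal.tsum_mul_left]
          exact tsum_congr fun w => by ring
      _ ≤ ∑' w, Q' x w * kpowE Q' n w y :=
          ENNReal.tsum_le_tsum fun w => mul_le_mul' (hQ x w) (mul_pow_kpowE_le hQ n w y)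

lemma kpowE_le_pow_mul_greenE {μ : ℝ≥0∞}
    (hQ : ∀ x y, Q' x y ≤ (if x = y then μ else 0) + Q x y) {t : ℝ≥0∞} (ht0 : t ≠ 0) (ht : t ≠ ∞) :
    ∀ n x y, kpowE Q' n x y ≤ (μ + t⁻¹) ^ n * greenE Q x y t
  | 0, x, y => by
    rw [pow_zero, one_mul, greenE_eq_add]
    exact le_self_add
  | n+1, x, y => by
    have hstep : ∑' w, Q x w * greenE Q w y t ≤ t⁻¹ * greenE Q x y t := by
      rw [← ENNReal.mul_le_iff_le_inv ht0 ht, greenE_eq_add Q x y t]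
      exact le_add_self
    calc kpowE Q' (n+1) x y
        ≤ ∑' w, ((if x = w then μ else 0) + Q x w) * ((μ + t⁻¹) ^ n * greenE Q w y t) :=
          ENNReal.tsum_le_tsum fun w =>
            mul_le_mul' (hQ x w) (kpowE_le_pow_mul_greenE hQ ht0 ht n w y)
      _ = (μ + t⁻¹) ^ n * (μ * greenE Q x y t + ∑' w, Q x w * greenE Q w y t) := by
          simp only [add_mul, ENNReal.tsum_add, ite_mul, zero_mul, tsum_ite_eq',
            ENNReal.tsum_mul_left, mul_left_comm (Q x _)]
          ring
      _ ≤ (μ + t⁻¹) ^ n * (μ * greenE Q x y t + t⁻¹ * greenE Q x y t) := by gcongr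
      _ = (μ + t⁻¹) ^ (n+1) * greenE Q x y t := by ring

end kpowE

noncomputable def kernelE (P : S → S → ℝ) : S → S → ℝ≥0∞ :=
  fun x y => ENNReal.ofReal (P x y)

section IsTransProb

variable {P : S → S → ℝ}

lemma kpow_nonneg (hP : ∀ x y, 0 ≤ P x y) : ∀ n x y, 0 ≤ kpow P n x y
  | 0, x, y => by simp only [kpow]; split <;> norm_num
  | n+1, x, y => tsum_nonneg fun w => mul_nonneg (hP x w) (kpow_nonneg hP n w y)

lemma IsTransProb.kpow_le_one (hP : IsTransProb P) : ∀ n x y, kpow P n x y ≤ 1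
  | 0, x, y => by simp only [kpow]; split <;> norm_num
  | n+1, x, y => by
    have hle (w : S) : P x w * kpow P n w y ≤ P x w :=
      mul_le_of_le_one_right (hP.1 x w) (hP.kpow_le_one n w y)
    have hsummable := (hP.2 x).summable.of_nonneg_of_le
      (fun w => mul_nonneg (hP.1 x w) (kpow_nonneg hP.1 n w y)) hle
    exact (hsummable.tsum_le_tsum hle (hP.2 x).summable).trans_eq (hP.2 x).tsum_eq

lemma IsTransProb.kpowE_kernelE (hP : IsTransProb P) :
    ∀ n x y, kpowE (kernelE P) n x y = ENNReal.ofReal (kpow P n x y)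
  | 0, x, y => by simp only [kpowE, kpow]; split <;> simp
  | n+1, x, y => by
    have hnonneg (w : S) : 0 ≤ P x w * kpow P n w y :=
      mul_nonneg (hP.1 x w) (kpow_nonneg hP.1 n w y)
    have hsummable := (hP.2 x).summable.of_nonneg_of_le hnonneg
      fun w => mul_le_of_le_one_right (hP.1 x w) (hP.kpow_le_one n w y)
    simp only [kpowE, kpow, hP.kpowE_kernelE n, kernelE,
      ENNReal.ofReal_tsum_of_nonneg hnonneg hsummable, ENNReal.ofReal_mul (hP.1 x _)]

lemma IsTransProb.specRadiusE_eq (hP : IsTransProb P) :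
    specRadiusE P = ⨆ x, (radiusE fun n => kpowE (kernelE P) n x x)⁻¹ := by
  refine iSup_congr fun x => ?_
  rw [convRadius_eq_radiusE (kpow_nonneg hP.1 · x x)]
  simp only [hP.kpowE_kernelE]

lemma IsTransProb.specRadiusE_le_one (hP : IsTransProb P) : specRadiusE P ≤ 1 := by
  rw [hP.specRadiusE_eq]
  refine iSup_le fun x => ENNReal.inv_le_one.2 (one_le_radiusE fun n => ?_)
  rw [hP.kpowE_kernelE]
  exact ENNReal.ofReal_le_one.2 (hP.kpow_le_one n x x)

lemma IsTransProb.specRadiusE_ne_top (hP : IsTransProb P) : specRadiusE P ≠ ∞ :=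
  ne_top_of_le_ne_top ENNReal.one_ne_top hP.specRadiusE_le_one

lemma IsTransProb.specRadius_le_one (hP : IsTransProb P) : specRadius P ≤ 1 :=
  ENNReal.toReal_le_of_le_ofReal zero_le_one (by simpa using hP.specRadiusE_le_one)

end IsTransProb

section lazy

variable {P : S → S → ℝ} {L : Set S} {μ : ℝ}

lemma isTransProb_lazy (hP : IsTransProb P) (h0 : 0 ≤ μ) (h1 : μ ≤ 1) :
    IsTransProb (lazy P L μ) := by
  refine ⟨fun x y => ?_, fun x => ?_⟩
  · unfold lazy
    split_ifs <;> nlinarith [hP.1 x y]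
  · unfold lazy
    split_ifs with hx
    · have hdiag : HasSum (fun y => if x = y then μ else 0) μ := by
        simpa [eq_comm] using hasSum_ite_eq x μ
      simpa using hdiag.add ((hP.2 x).mul_left (1 - μ))
    · exact hP.2 x

lemma lazy_lazy {κ κ' : ℝ} (hκ : κ ≠ 1) :
    lazy (lazy P L κ) L ((κ' - κ) / (1 - κ)) = lazy P L κ' := by
  have hμ : (κ' - κ) / (1 - κ) * (1 - κ) = κ' - κ := div_mul_cancel₀ _ (sub_ne_zero.2 hκ.symm)
  funext x y
  unfold lazy
  split_ifs
  · linear_combination (1 - P x y) * hμ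
  · linear_combination -P x y * hμ
  · rfl

lemma kernelE_lazy_le (hP : ∀ x y, 0 ≤ P x y) (h0 : 0 ≤ μ) (x y : S) :
    kernelE (lazy P L μ) x y ≤ (if x = y then ENNReal.ofReal μ else 0) + kernelE P x y := by
  have hdiag :
      (if x = y then ENNReal.ofReal μ else 0) = ENNReal.ofReal (if x = y then μ else 0) := by
    split_ifs <;> simp
  rw [hdiag, kernelE, kernelE, ← ENNReal.ofReal_add (by split_ifs <;> simp [h0]) (hP x y)]
  refine ENNReal.ofReal_le_ofReal ?_
  unfold lazy
  split_ifs <;> nlinarith [hP x y]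

lemma ofReal_mul_kernelE_le_kernelE_lazy (hP : ∀ x y, 0 ≤ P x y) (h0 : 0 ≤ μ) (h1 : μ ≤ 1)
    (x y : S) :
    ENNReal.ofReal (1 - μ) * kernelE P x y ≤ kernelE (lazy P L μ) x y := by
  rw [kernelE, kernelE, ← ENNReal.ofReal_mul (sub_nonneg.2 h1)]
  refine ENNReal.ofReal_le_ofReal ?_
  unfold lazy
  split_ifs <;> nlinarith [hP x y]

lemma IsTransProb.specRadiusE_lazy_le (hP : IsTransProb P) (h0 : 0 ≤ μ) (h1 : μ ≤ 1) :
    specRadiusE (lazy P L μ) ≤ specRadiusE P + ENNReal.ofReal μ := by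
  rw [hP.specRadiusE_eq, (isTransProb_lazy hP h0 h1).specRadiusE_eq]
  refine iSup_le fun x => le_trans ?_ (add_le_add_left (le_iSup _ x) _)
  exact inv_radiusE_le_add fun t ht0 ht => ⟨_, ht,
    fun n => kpowE_le_pow_mul_greenE (kernelE_lazy_le hP.1 h0) (by simpa) ENNReal.coe_ne_top
      n x x⟩

lemma IsTransProb.ofReal_mul_specRadiusE_le_specRadiusE_lazy (hP : IsTransProb P) (h0 : 0 ≤ μ)
    (h1 : μ ≤ 1) :
    ENNReal.ofReal (1 - μ) * specRadiusE P ≤ specRadiusE (lazy P L μ) := by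
  rw [hP.specRadiusE_eq, (isTransProb_lazy hP h0 h1).specRadiusE_eq, ENNReal.mul_iSup]
  exact iSup_mono fun x => mul_inv_radiusE_le ENNReal.ofReal_ne_top
    (mul_pow_kpowE_le (ofReal_mul_kernelE_le_kernelE_lazy hP.1 h0 h1) · x x)

lemma IsTransProb.specRadius_lazy_le (hP : IsTransProb P) (h0 : 0 ≤ μ) (h1 : μ ≤ 1) :
    specRadius (lazy P L μ) ≤ specRadius P + μ := by
  refine ENNReal.toReal_le_of_le_ofReal (add_nonneg ENNReal.toReal_nonneg h0) ?_
  rw [specRadius, ENNReal.ofReal_add ENNReal.toReal_nonneg h0,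
    ENNReal.ofReal_toReal hP.specRadiusE_ne_top]
  exact hP.specRadiusE_lazy_le h0 h1

lemma IsTransProb.mul_specRadius_le_specRadius_lazy (hP : IsTransProb P) (h0 : 0 ≤ μ) (h1 : μ ≤ 1) :
    (1 - μ) * specRadius P ≤ specRadius (lazy P L μ) := by
  have h := ENNReal.toReal_mono (isTransProb_lazy hP h0 h1).specRadiusE_ne_top
    (hP.ofReal_mul_specRadiusE_le_specRadiusE_lazy (L := L) h0 h1)
  rwa [ENNReal.toReal_mul, ENNReal.toReal_ofReal (sub_nonneg.2 h1)] at h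

lemma IsTransProb.abs_specRadius_lazy_sub_le (hP : IsTransProb P) {κ κ' : ℝ} (hκ : 0 ≤ κ)
    (hle : κ ≤ κ') (hκ' : κ' < 1) :
    |specRadius (lazy P L κ') - specRadius (lazy P L κ)| ≤ (κ' - κ) / (1 - κ) := by
  have hκ1 : κ < 1 := hle.trans_lt hκ'
  have hμ0 : 0 ≤ (κ' - κ) / (1 - κ) := div_nonneg (by linarith) (by linarith)
  have hμ1 : (κ' - κ) / (1 - κ) ≤ 1 := (div_le_one (by linarith)).2 (by linarith)
  have hQ := isTransProb_lazy (L := L) hP hκ hκ1.le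
  have hup := hQ.specRadius_lazy_le (L := L) hμ0 hμ1
  have hlow := hQ.mul_specRadius_le_specRadius_lazy (L := L) hμ0 hμ1
  rw [lazy_lazy hκ1.ne] at hup hlow
  -- `ρ ≤ 1` turns the multiplicative lower bound into an additive one
  have hρ1 := hQ.specRadius_le_one
  have hρ0 : 0 ≤ specRadius (lazy P L κ) := ENNReal.toReal_nonneg
  rw [abs_le]
  constructor <;> nlinarith

lemma IsTransProb.dist_specRadius_lazy_le (hP : IsTransProb P) {κ κ₀ : ℝ}
    (hκ : κ ∈ Set.Ico 0 1) (hκ₀ : κ₀ ∈ Set.Ico 0 1) :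
    dist (specRadius (lazy P L κ)) (specRadius (lazy P L κ₀)) ≤ dist κ κ₀ / (1 - κ₀) := by
  rw [Real.dist_eq, Real.dist_eq]
  rcases le_total κ κ₀ with h | h
  · rw [abs_sub_comm, abs_of_nonpos (sub_nonpos.2 h)]
    refine (hP.abs_specRadius_lazy_sub_le hκ.1 h hκ₀.2).trans ?_
    rw [neg_sub]
    gcongr
    linarith [hκ₀.2]
  · rw [abs_of_nonneg (sub_nonneg.2 h)]
    exact hP.abs_specRadius_lazy_sub_le hκ₀.1 h hκ.2

end lazy

theorem lazy_specRadius_continuousOn_general {S : Type*} (P : S → S → ℝ)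
    (hP : IsTransProb P)
    (L : Set S) :
    ContinuousOn (fun κ : ℝ => specRadius (lazy P L κ)) (Set.Ico 0 1) := by
  intro κ₀ hκ₀
  rw [Metric.continuousWithinAt_iff]
  intro ε hε
  have hd : 0 < 1 - κ₀ := sub_pos.2 hκ₀.2
  refine ⟨ε * (1 - κ₀), by positivity, fun κ hκ hdist => ?_⟩
  exact (hP.dist_specRadius_lazy_le hκ hκ₀).trans_lt ((div_lt_iff₀ hd).2 hdist)

theorem lazy_specRadius_continuousOn {S : Type*} [Countable S] [Infinite S] (P : S → S → ℝ)
    (hP : IsTransProb P) (hirr : Irred P)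
    (L : Set S) :
    ContinuousOn (fun κ : ℝ => specRadius (lazy P L κ)) (Set.Ico 0 1) :=
  lazy_specRadius_continuousOn_general P hP L
end

section
/- Suppose ρ < 1, L ⊆ S is nonempty and finite, and P is rho-recurrent. Then for every κ ∈ (0,1), P^L_κ is strictly rho-recurrent. -/
open scoped Classical ENNReal NNReal

variable {S : Type*}

/-!
For a transition matrix `W` and a state `x`, the renewal identity `G(x,x|z) = ∑ᵣ U(x,x|z)ʳ`
shows that `G(x,x|z) = ∞` exactly when `U(x,x|z) ≥ 1`. Making a single state `a` lazy only changes
the first step of an excursion from `a`, so the lazy chain `Q` has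
`U_Q(a,a|z) = κ z + (1 - κ) U_P(a,a|z)`. If `P` is rho-recurrent with `R = 1/ρ > 1`, then
`U_P(a,a|R) = 1` and `U_P(a,a|1) < 1`, hence `U_Q(a,a|1) < 1 < κ R + 1 - κ = U_Q(a,a|R) < ∞`.
By continuity, `U_Q(a,a|·) ≥ 1` at the radius of convergence `r ∈ (1, R)` of `G_Q(a,a|·)`, so `Q` is
rho-recurrent with `ρ(Q) = 1/r < 1`, and `r(U_Q|a,a) ≥ R > r`. As `P^{L ∪ {a}}_κ` is the
`{a}`-lazy version of `P^L_κ`, induction on the finite set `L` (carrying rho-recurrence and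
`ρ < 1` along) proves the theorem.
-/

section Kernel

-- `ℝ≥0∞`-valued counterparts of `kpow` and `fret`, in which every `tsum` is unconditional.
noncomputable def ekpow (A : S → S → ℝ≥0∞) : ℕ → S → S → ℝ≥0∞
  | 0, x, y => if x = y then 1 else 0
  | n+1, x, y => ∑' w, A x w * ekpow A n w y

noncomputable def efret (A : S → S → ℝ≥0∞) : ℕ → S → S → ℝ≥0∞
  | 0, _, _ => 0
  | 1, x, y => A x y
  | n+2, x, y => ∑' w, if w = y then 0 else A x w * efret A (n+1) w y

noncomputable def egreen (A : S → S → ℝ≥0∞) (x y : S) : ℝ≥0∞ := ∑' n, ekpow A n x y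

noncomputable def eUfun (A : S → S → ℝ≥0∞) (x y : S) : ℝ≥0∞ := ∑' n, efret A n x y

variable (A : S → S → ℝ≥0∞)

lemma ekpow_smul (t : ℝ≥0∞) : ∀ n x y, ekpow (t • A) n x y = t ^ n * ekpow A n x y
  | 0, x, y => by simp [ekpow]
  | n+1, x, y => by
    simp only [ekpow, ekpow_smul t n, Pi.smul_apply, smul_eq_mul, ← ENNReal.tsum_mul_left]
    exact tsum_congr fun w => by ring

lemma efret_smul (t : ℝ≥0∞) : ∀ n x y, efret (t • A) n x y = t ^ n * efret A n x y
  | 0, x, y => by simp [efret]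
  | 1, x, y => by simp [efret]
  | n+2, x, y => by
    simp only [efret, efret_smul t (n+1), Pi.smul_apply, smul_eq_mul, ← ENNReal.tsum_mul_left]
    refine tsum_congr fun w => ?_
    split_ifs
    · simp
    · ring

lemma ekpow_mono {A B : S → S → ℝ≥0∞} (h : A ≤ B) : ∀ n x y, ekpow A n x y ≤ ekpow B n x y
  | 0, _, _ => le_rfl
  | n+1, x, y => ENNReal.tsum_le_tsum fun w => mul_le_mul' (h x w) (ekpow_mono h n w y)

lemma ekpow_add (m n : ℕ) : ∀ x y, ekpow A (m + n) x y = ∑' w, ekpow A m x w * ekpow A n w y := by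
  induction m with
  | zero =>
    intro x y
    rw [zero_add, tsum_eq_single x fun w hw => by simp [ekpow, Ne.symm hw]]
    simp [ekpow]
  | succ m ih =>
    intro x y
    simp only [Nat.succ_add, ekpow, ih, ← ENNReal.tsum_mul_left, ← ENNReal.tsum_mul_right]
    rw [ENNReal.tsum_comm]
    exact tsum_congr fun v => tsum_congr fun w => (mul_assoc _ _ _).symm

variable {A}

lemma ekpow_le_one (hA : ∀ x, ∑' y, A x y ≤ 1) : ∀ n x y, ekpow A n x y ≤ 1
  | 0, x, y => by unfold ekpow; split_ifs <;> simp
  | n+1, x, y => calc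
      ∑' w, A x w * ekpow A n w y ≤ ∑' w, A x w :=
        ENNReal.tsum_le_tsum fun w => mul_le_of_le_one_right' (ekpow_le_one hA n w y)
      _ ≤ 1 := hA x

lemma efret_le_one (hA : ∀ x, ∑' y, A x y ≤ 1) : ∀ n x y, efret A n x y ≤ 1
  | 0, x, y => zero_le_one
  | 1, x, y => (ENNReal.le_tsum y).trans (hA x)
  | n+2, x, y => calc
      ∑' w, (if w = y then 0 else A x w * efret A (n+1) w y) ≤ ∑' w, A x w := by
        refine ENNReal.tsum_le_tsum fun w => ?_
        split_ifs
        · exact zero_le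
        · exact mul_le_of_le_one_right' (efret_le_one hA (n+1) w y)
      _ ≤ 1 := hA x

end Kernel

section Renewal

variable {A : S → S → ℝ≥0∞} {x : S}

lemma egreen_eq (w x : S) :
    egreen A w x = (if w = x then 1 else 0) + ∑' v, A w v * egreen A v x := by
  rw [egreen, tsum_eq_zero_add' ENNReal.summable]
  simp only [ekpow, egreen, ← ENNReal.tsum_mul_left]
  rw [ENNReal.tsum_comm]

lemma eUfun_eq_tsum_succ (w x : S) : eUfun A w x = ∑' n, efret A (n+1) w x := by
  rw [eUfun, tsum_eq_zero_add' ENNReal.summable, efret, zero_add]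

lemma eUfun_eq_add_tsum (w x : S) : eUfun A w x = A w x + ∑' n, efret A (n+2) w x := by
  rw [eUfun_eq_tsum_succ, tsum_eq_zero_add' ENNReal.summable, efret]

lemma eUfun_eq (w x : S) :
    eUfun A w x = A w x + ∑' v, if v = x then 0 else A w v * eUfun A v x := by
  rw [eUfun_eq_add_tsum]
  simp only [efret, eUfun_eq_tsum_succ _ x]
  rw [ENNReal.tsum_comm]
  congr 1
  refine tsum_congr fun v => ?_
  split_ifs
  · simp
  · exact ENNReal.tsum_mul_left

lemma egreen_le_of_supersolution (h : S → ℝ≥0∞)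
    (hh : ∀ w, (if w = x then 1 else 0) + ∑' v, A w v * h v ≤ h w) (w : S) :
    egreen A w x ≤ h w := by
  suffices ∀ N w, ∑ n ∈ Finset.range N, ekpow A n w x ≤ h w from
    ENNReal.tsum_le_of_sum_range_le fun N => this N w
  intro N
  induction N with
  | zero => simp
  | succ N ih =>
    intro w
    calc ∑ n ∈ Finset.range (N+1), ekpow A n w x
        = (if w = x then 1 else 0) + ∑' v, A w v * ∑ n ∈ Finset.range N, ekpow A n v x := by
          simp only [Finset.sum_range_succ', ekpow, Finset.mul_sum]
          rw [add_comm, Summable.tsum_finsetSum fun _ _ => ENNReal.summable]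
      _ ≤ (if w = x then 1 else 0) + ∑' v, A w v * h v := by gcongr with v; exact ih v
      _ ≤ h w := hh w

lemma eUfun_mul_le_of_supersolution (k : S → ℝ≥0∞) (c : ℝ≥0∞)
    (hk : ∀ w, A w x * c + ∑' v, (if v = x then 0 else A w v * k v) ≤ k w) (w : S) :
    eUfun A w x * c ≤ k w := by
  suffices ∀ N w, (∑ n ∈ Finset.range N, efret A (n+1) w x) * c ≤ k w by
    rw [eUfun_eq_tsum_succ, ← ENNReal.tsum_mul_right]
    exact ENNReal.tsum_le_of_sum_range_le fun N => by rw [← Finset.sum_mul]; exact this N w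
  intro N
  induction N with
  | zero => simp
  | succ N ih =>
    intro w
    calc (∑ n ∈ Finset.range (N+1), efret A (n+1) w x) * c
        = A w x * c + ∑' v, (if v = x then 0 else
            A w v * ((∑ n ∈ Finset.range N, efret A (n+1) v x) * c)) := by
          simp only [Finset.sum_range_succ', efret, add_mul, Finset.sum_mul,
            ← ENNReal.tsum_mul_right]
          rw [add_comm, ← Summable.tsum_finsetSum fun _ _ => ENNReal.summable]
          congr 1
          refine tsum_congr fun v => ?_
          split_ifs <;> simp [Finset.mul_sum, mul_assoc]
      _ ≤ A w x * c + ∑' v, (if v = x then 0 else A w v * k v) := by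
          gcongr with v
          split_ifs
          · exact le_rfl
          · gcongr
            exact ih v
      _ ≤ k w := hk w


lemma one_add_eUfun_mul_egreen_le : 1 + eUfun A x x * egreen A x x ≤ egreen A x x := by
  -- `k = G(·,x) - δₓ` is a supersolution of the first-return equation scaled by `G(x,x)`.
  set k : S → ℝ≥0∞ := fun w => ∑' v, A w v * egreen A v x
  have hk : ∀ w, A w x * egreen A x x + ∑' v, (if v = x then 0 else A w v * k v) ≤ k w := by
    intro w
    simp only [k]
    rw [ENNReal.tsum_eq_add_tsum_ite x (f := fun v => A w v * egreen A v x)]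
    gcongr with v
    split_ifs
    · exact le_rfl
    · gcongr
      rw [egreen_eq v x]
      exact le_add_self
  calc 1 + eUfun A x x * egreen A x x ≤ 1 + k x := by
        gcongr
        exact eUfun_mul_le_of_supersolution k _ hk x
    _ = egreen A x x := by rw [egreen_eq x x, if_pos rfl]

lemma egreen_self_eq_tsum_pow : egreen A x x = ∑' r, eUfun A x x ^ r := by
  have hc : 1 + eUfun A x x * ∑' r, eUfun A x x ^ r = ∑' r, eUfun A x x ^ r := by
    conv_rhs => rw [tsum_eq_zero_add' ENNReal.summable]
    simp only [pow_zero, pow_succ', ENNReal.tsum_mul_left]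
  set c := ∑' r, eUfun A x x ^ r
  refine le_antisymm ?_ ?_
  · -- `c = 1 + U c` makes `δₓ + U(·,x) c` a solution of the Green equation.
    set h : S → ℝ≥0∞ := fun w => (if w = x then 1 else 0) + eUfun A w x * c
    have hh : ∀ w, (if w = x then 1 else 0) + ∑' v, A w v * h v ≤ h w := by
      intro w
      simp only [h]
      rw [ENNReal.tsum_eq_add_tsum_ite x, if_pos rfl, hc, eUfun_eq w x, add_mul,
        ← ENNReal.tsum_mul_right]
      gcongr with v
      split_ifs <;> simp [mul_assoc]
    simpa [h, hc] using egreen_le_of_supersolution h hh x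
  · refine ENNReal.tsum_le_of_sum_range_le fun N => ?_
    induction N with
    | zero => simp
    | succ N ih => calc
        ∑ r ∈ Finset.range (N+1), eUfun A x x ^ r
            = 1 + eUfun A x x * ∑ r ∈ Finset.range N, eUfun A x x ^ r := by
          simp only [Finset.sum_range_succ', pow_succ', Finset.mul_sum, pow_zero, add_comm]
        _ ≤ 1 + eUfun A x x * egreen A x x := by gcongr
        _ ≤ egreen A x x := one_add_eUfun_mul_egreen_le

lemma egreen_self_eq_top_iff : egreen A x x = ∞ ↔ 1 ≤ eUfun A x x := by
  rw [egreen_self_eq_tsum_pow, ENNReal.tsum_geometric, ENNReal.inv_eq_top, tsub_eq_zero_iff_le]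

lemma egreen_self_eq_top_of_ne_zero {y : S} {m k : ℕ} (hyx : ekpow A m y x ≠ 0)
    (hxy : ekpow A k x y ≠ 0) (h : egreen A x x = ∞) : egreen A y y = ∞ := by
  have hle : ∀ n, ekpow A m y x * ekpow A k x y * ekpow A n x x ≤ ekpow A (m + n + k) y y :=
    fun n => calc
      _ = ekpow A m y x * ekpow A n x x * ekpow A k x y := by ring
      _ ≤ ekpow A (m + n) y x * ekpow A k x y := by
          rw [ekpow_add A m n]; gcongr; exact ENNReal.le_tsum x
      _ ≤ ekpow A (m + n + k) y y := by rw [ekpow_add A (m + n) k]; exact ENNReal.le_tsum x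
  refine top_unique ?_
  calc ∞ = ekpow A m y x * ekpow A k x y * egreen A x x := by
        rw [h, ENNReal.mul_top (mul_ne_zero hyx hxy)]
    _ ≤ ∑' n, ekpow A (m + n + k) y y := by
        rw [egreen, ← ENNReal.tsum_mul_left]; exact ENNReal.tsum_le_tsum hle
    _ ≤ egreen A y y :=
        ENNReal.tsum_comp_le_tsum_of_injective (fun a b hab => by simpa using hab) _

end Renewal

section RowModification

variable {B C : S → S → ℝ≥0∞} {a : S}

lemma efret_eq_of_rows_eq (hrows : ∀ v ≠ a, B v = C v) :
    ∀ n, ∀ v ≠ a, efret B n v a = efret C n v a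
  | 0, _, _ => rfl
  | 1, v, hv => by simp [efret, hrows v hv]
  | n+2, v, hv => by
    simp only [efret, hrows v hv]
    refine tsum_congr fun w => ?_
    split_ifs with hw
    · rfl
    · rw [efret_eq_of_rows_eq hrows (n+1) w hw]

lemma eUfun_self_eq_of_rows_eq {c d : ℝ≥0∞} (hrows : ∀ v ≠ a, B v = C v)
    (hrow : ∀ v, B a v = (if a = v then c else 0) + d * C a v) :
    eUfun B a a = c + d * eUfun C a a := by
  have hexc : ∀ n, efret B (n+2) a a = d * efret C (n+2) a a := by
    intro n
    simp only [efret, ← ENNReal.tsum_mul_left]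
    refine tsum_congr fun v => ?_
    split_ifs with hv
    · simp
    · rw [hrow, if_neg (Ne.symm hv), zero_add, efret_eq_of_rows_eq hrows (n+1) v hv, mul_assoc]
  rw [eUfun_eq_add_tsum, eUfun_eq_add_tsum, tsum_congr hexc, ENNReal.tsum_mul_left, hrow,
    if_pos rfl]
  ring

end RowModification

section Bridge

noncomputable def eKernel (W : S → S → ℝ) : S → S → ℝ≥0∞ := fun x y => ENNReal.ofReal (W x y)

lemma ofReal_tsum_mul_of_le_one {ι : Type*} {p g : ι → ℝ} (hp : ∀ w, 0 ≤ p w) (hps : Summable p)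
    (hg0 : ∀ w, 0 ≤ g w) (hg1 : ∀ w, g w ≤ 1) :
    ENNReal.ofReal (∑' w, p w * g w) = ∑' w, ENNReal.ofReal (p w) * ENNReal.ofReal (g w) := by
  have hs : Summable fun w => p w * g w := hps.of_nonneg_of_le
    (fun w => mul_nonneg (hp w) (hg0 w)) (fun w => mul_le_of_le_one_right (hp w) (hg1 w))
  rw [ENNReal.ofReal_tsum_of_nonneg (fun w => mul_nonneg (hp w) (hg0 w)) hs]
  exact tsum_congr fun w => ENNReal.ofReal_mul (hp w)

namespace IsTransProb

variable {W : S → S → ℝ}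

lemma tsum_eKernel (hW : IsTransProb W) (x : S) : ∑' y, eKernel W x y = 1 := by
  simp only [eKernel]
  rw [← ENNReal.ofReal_tsum_of_nonneg (hW.1 x) (hW.2 x).summable, (hW.2 x).tsum_eq,
    ENNReal.ofReal_one]

lemma kpow_nonneg_and_ofReal (hW : IsTransProb W) :
    ∀ n x y, 0 ≤ kpow W n x y ∧ ENNReal.ofReal (kpow W n x y) = ekpow (eKernel W) n x y
  | 0, x, y => by unfold kpow ekpow; split_ifs <;> simp
  | n+1, x, y => by
    -- the bound `kpow ≤ 1`, read off the `ℝ≥0∞` side, makes the real series summable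
    have ih := fun w => kpow_nonneg_and_ofReal hW n w y
    have hle : ∀ w, kpow W n w y ≤ 1 := fun w => ENNReal.ofReal_le_one.mp <|
      (ih w).2 ▸ ekpow_le_one (fun x => (hW.tsum_eKernel x).le) n w y
    refine ⟨tsum_nonneg fun w => mul_nonneg (hW.1 x w) (ih w).1, ?_⟩
    simp only [kpow, ekpow]
    rw [ofReal_tsum_mul_of_le_one (hW.1 x) (hW.2 x).summable (fun w => (ih w).1) hle]
    exact tsum_congr fun w => by rw [(ih w).2]; rfl

lemma kpow_nonneg (hW : IsTransProb W) (n : ℕ) (x y : S) : 0 ≤ kpow W n x y :=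
  (hW.kpow_nonneg_and_ofReal n x y).1

lemma ofReal_kpow (hW : IsTransProb W) (n : ℕ) (x y : S) :
    ENNReal.ofReal (kpow W n x y) = ekpow (eKernel W) n x y :=
  (hW.kpow_nonneg_and_ofReal n x y).2

lemma fret_nonneg_and_ofReal (hW : IsTransProb W) :
    ∀ n x y, 0 ≤ fret W n x y ∧ ENNReal.ofReal (fret W n x y) = efret (eKernel W) n x y
  | 0, x, y => by simp [fret, efret]
  | 1, x, y => ⟨hW.1 x y, rfl⟩
  | n+2, x, y => by
    set g : S → ℝ := fun w => if w = y then 0 else fret W (n+1) w y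
    have ih := fun w => fret_nonneg_and_ofReal hW (n+1) w y
    have hg0 : ∀ w, 0 ≤ g w := fun w => by simp only [g]; split_ifs; exacts [le_rfl, (ih w).1]
    have hg1 : ∀ w, g w ≤ 1 := fun w => by
      simp only [g]
      split_ifs
      · exact zero_le_one
      · exact ENNReal.ofReal_le_one.mp <|
          (ih w).2 ▸ efret_le_one (fun x => (hW.tsum_eKernel x).le) (n+1) w y
    have hfret : fret W (n+2) x y = ∑' w, W x w * g w := by
      simp only [fret, g]
      exact tsum_congr fun w => by split_ifs <;> simp
    refine ⟨hfret ▸ tsum_nonneg fun w => mul_nonneg (hW.1 x w) (hg0 w), ?_⟩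
    rw [hfret, ofReal_tsum_mul_of_le_one (hW.1 x) (hW.2 x).summable hg0 hg1]
    simp only [efret, g]
    refine tsum_congr fun w => ?_
    split_ifs
    · simp
    · rw [(ih w).2]; rfl

lemma fret_nonneg (hW : IsTransProb W) (n : ℕ) (x y : S) : 0 ≤ fret W n x y :=
  (hW.fret_nonneg_and_ofReal n x y).1

lemma green_eq_egreen (hW : IsTransProb W) (x y : S) {z : ℝ} (hz : 0 ≤ z) :
    green W x y z = egreen (ENNReal.ofReal z • eKernel W) x y := by
  simp only [green, egreen, ekpow_smul]
  refine tsum_congr fun n => ?_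
  rw [ENNReal.ofReal_mul (hW.kpow_nonneg n x y), hW.ofReal_kpow, ENNReal.ofReal_pow hz, mul_comm]

lemma Ufun_eq_eUfun (hW : IsTransProb W) (x y : S) {z : ℝ} (hz : 0 ≤ z) :
    Ufun W x y z = eUfun (ENNReal.ofReal z • eKernel W) x y := by
  simp only [Ufun, eUfun, efret_smul]
  refine tsum_congr fun n => ?_
  rw [ENNReal.ofReal_mul (hW.fret_nonneg n x y), (hW.fret_nonneg_and_ofReal n x y).2,
    ENNReal.ofReal_pow hz, mul_comm]

lemma kpow_pos_iff (hW : IsTransProb W) {n : ℕ} {x y : S} :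
    0 < kpow W n x y ↔ ekpow (eKernel W) n x y ≠ 0 := by
  rw [← hW.ofReal_kpow, ← pos_iff_ne_zero, ENNReal.ofReal_pos]

lemma green_self_eq_top_iff (hW : IsTransProb W) (x : S) {z : ℝ} (hz : 0 ≤ z) :
    green W x x z = ∞ ↔ 1 ≤ Ufun W x x z := by
  rw [hW.green_eq_egreen x x hz, hW.Ufun_eq_eUfun x x hz, egreen_self_eq_top_iff]

lemma green_self_eq_top_of_irred (hW : IsTransProb W) (hirr : Irred W) {x : S} {z : ℝ}
    (hz : 0 < z) (h : green W x x z = ∞) (y : S) : green W y y z = ∞ := by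
  obtain ⟨m, hm⟩ := hirr y x
  obtain ⟨k, hk⟩ := hirr x y
  have ht : ENNReal.ofReal z ≠ 0 := (ENNReal.ofReal_pos.2 hz).ne'
  rw [hW.green_eq_egreen _ _ hz.le] at h ⊢
  refine egreen_self_eq_top_of_ne_zero (m := m) (k := k) ?_ ?_ h <;> rw [ekpow_smul] <;>
    exact mul_ne_zero (pow_ne_zero _ ht) (hW.kpow_pos_iff.1 ‹_›)

end IsTransProb

end Bridge

section PowerSeries

variable {a : ℕ → ℝ}

lemma summable_iff_tsum_ofReal_ne_top {ι : Type*} {f : ι → ℝ} (hf : ∀ i, 0 ≤ f i) :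
    Summable f ↔ ∑' i, ENNReal.ofReal (f i) ≠ ∞ :=
  ⟨Summable.tsum_ofReal_ne_top, fun h =>
    (ENNReal.summable_toReal h).congr fun i => ENNReal.toReal_ofReal (hf i)⟩

lemma tsum_ofReal_mul_pow_mono (ha : ∀ n, 0 ≤ a n) {z z' : ℝ} (hz : 0 ≤ z) (hzz' : z ≤ z') :
    ∑' n, ENNReal.ofReal (a n * z ^ n) ≤ ∑' n, ENNReal.ofReal (a n * z' ^ n) :=
  ENNReal.tsum_le_tsum fun n => ENNReal.ofReal_le_ofReal <|
    mul_le_mul_of_nonneg_left (pow_le_pow_left₀ hz hzz' n) (ha n)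

lemma le_convRadius (ha : ∀ n, 0 ≤ a n) {z : ℝ} (hz : 0 ≤ z)
    (h : ∑' n, ENNReal.ofReal (a n * z ^ n) ≠ ∞) : ENNReal.ofReal z ≤ convRadius a := by
  have hs : Summable fun n => a n * (z.toNNReal : ℝ) ^ n := by
    rw [Real.coe_toNNReal z hz]
    exact (summable_iff_tsum_ofReal_ne_top fun n => mul_nonneg (ha n) (pow_nonneg hz n)).2 h
  exact le_iSup₂ (f := fun (w : ℝ≥0) (_ : Summable fun n => a n * (w : ℝ) ^ n) => (w : ℝ≥0∞))
    z.toNNReal hs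

lemma convRadius_le (ha : ∀ n, 0 ≤ a n) {z : ℝ} (hz : 0 ≤ z)
    (h : ∑' n, ENNReal.ofReal (a n * z ^ n) = ∞) : convRadius a ≤ ENNReal.ofReal z := by
  refine iSup₂_le fun w hw => le_of_not_gt fun hlt => ?_
  rw [← ENNReal.ofReal_coe_nnreal, ENNReal.ofReal_lt_ofReal_iff_of_nonneg hz] at hlt
  exact hw.tsum_ofReal_ne_top (top_unique (h ▸ tsum_ofReal_mul_pow_mono ha hz hlt.le))

lemma lowerSemicontinuous_tsum_ofReal_mul_pow (a : ℕ → ℝ) :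
    LowerSemicontinuous fun z : ℝ => ∑' n, ENNReal.ofReal (a n * z ^ n) :=
  lowerSemicontinuous_tsum fun n =>
    (ENNReal.continuous_ofReal.comp (continuous_const.mul (continuous_pow n))).lowerSemicontinuous

lemma continuousOn_tsum_ofReal_mul_pow (ha : ∀ n, 0 ≤ a n) {R : ℝ}
    (hR : ∑' n, ENNReal.ofReal (a n * R ^ n) ≠ ∞) :
    ContinuousOn (fun z : ℝ => ∑' n, ENNReal.ofReal (a n * z ^ n)) (Set.Icc 0 R) := by
  by_cases hR0 : 0 ≤ R
  swap
  · simp [Set.Icc_eq_empty_of_lt (not_le.1 hR0)]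
  have hnn : ∀ z ∈ Set.Icc 0 R, ∀ n, 0 ≤ a n * z ^ n :=
    fun z hz n => mul_nonneg (ha n) (pow_nonneg hz.1 n)
  have hle : ∀ z ∈ Set.Icc 0 R, ∀ n, a n * z ^ n ≤ a n * R ^ n :=
    fun z hz n => mul_le_mul_of_nonneg_left (pow_le_pow_left₀ hz.1 hz.2 n) (ha n)
  have hsR : Summable fun n => a n * R ^ n :=
    (summable_iff_tsum_ofReal_ne_top (hnn R ⟨hR0, le_rfl⟩)).2 hR
  have hcont : ContinuousOn (fun z : ℝ => ∑' n, a n * z ^ n) (Set.Icc 0 R) :=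
    continuousOn_tsum (fun n => (continuous_const.mul (continuous_pow n)).continuousOn) hsR
      fun n z hz => by rw [Real.norm_of_nonneg (hnn z hz n)]; exact hle z hz n
  refine (ENNReal.continuous_ofReal.comp_continuousOn hcont).congr fun z hz => ?_
  exact (ENNReal.ofReal_tsum_of_nonneg (hnn z hz)
    (hsR.of_nonneg_of_le (hnn z hz) (hle z hz))).symm

end PowerSeries

section SpectralRadius

variable {W : S → S → ℝ}

lemma ne_zero_of_green_self_eq_top {x : S} {z : ℝ} (h : green W x x z = ∞) : z ≠ 0 := by
  rintro rfl
  rw [green, tsum_eq_single 0 fun n hn => by simp [zero_pow hn]] at h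
  simp [kpow] at h

namespace IsTransProb

lemma convRadius_kpow_le (hW : IsTransProb W) (hirr : Irred W) (x y : S) :
    convRadius (fun n => kpow W n x x) ≤ convRadius (fun n => kpow W n y y) := by
  refine iSup₂_le fun z hz => ?_
  rcases eq_or_ne z 0 with rfl | hz0
  · simp
  rw [← ENNReal.ofReal_coe_nnreal]
  exact le_convRadius (fun n => hW.kpow_nonneg n y y) z.2 fun htop => hz.tsum_ofReal_ne_top
    (hW.green_self_eq_top_of_irred hirr (NNReal.coe_pos.2 (pos_iff_ne_zero.2 hz0)) htop x)

lemma specRadius_eq (hW : IsTransProb W) (hirr : Irred W) (x : S) :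
    specRadius W = (convRadius fun n => kpow W n x x).toReal⁻¹ := by
  have : Nonempty S := ⟨x⟩
  have hE : specRadiusE W = (convRadius fun n => kpow W n x x)⁻¹ := by
    rw [specRadiusE, iSup_congr fun y => by rw [le_antisymm (hW.convRadius_kpow_le hirr y x)
      (hW.convRadius_kpow_le hirr x y)], iSup_const]
  rw [specRadius, hE, ENNReal.toReal_inv]

lemma rhoRecurrent_of_green_eq_top (hW : IsTransProb W) (hirr : Irred W) {x : S}
    (h : green W x x (specRadius W)⁻¹ = ∞) : RhoRecurrent W :=
  hW.green_self_eq_top_of_irred hirr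
    ((inv_nonneg.2 ENNReal.toReal_nonneg).lt_of_ne' (ne_zero_of_green_self_eq_top h)) h

lemma green_toReal_convRadius_eq_top (hW : IsTransProb W) (x : S) {R : ℝ}
    (hc : convRadius (fun n => kpow W n x x) < ENNReal.ofReal R) (hR : Ufun W x x R ≠ ∞) :
    green W x x (convRadius fun n => kpow W n x x).toReal = ∞ := by
  set r := (convRadius fun n => kpow W n x x).toReal
  have hcr : convRadius (fun n => kpow W n x x) = ENNReal.ofReal r :=
    (ENNReal.ofReal_toReal hc.ne_top).symm
  have hr0 : 0 ≤ r := ENNReal.toReal_nonneg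
  have hrR : r < R := (ENNReal.ofReal_lt_ofReal_iff'.1 (hcr ▸ hc)).1
  have hU : ∀ z ∈ Set.Ioo r R, 1 ≤ Ufun W x x z := fun z hz => by
    rw [← hW.green_self_eq_top_iff x (hr0.trans hz.1.le)]
    by_contra hne
    have := le_convRadius (fun n => hW.kpow_nonneg n x x) (hr0.trans hz.1.le) hne
    rw [hcr, ENNReal.ofReal_le_ofReal_iff hr0] at this
    exact this.not_gt hz.1
  have hcont := (continuousOn_tsum_ofReal_mul_pow (fun n => hW.fret_nonneg n x x) hR r
    ⟨hr0, hrR.le⟩).mono fun z (hz : z ∈ Set.Ioo r R) => ⟨hr0.trans hz.1.le, hz.2.le⟩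
  have := left_nhdsWithin_Ioo_neBot hrR
  rw [hW.green_self_eq_top_iff x hr0]
  exact ge_of_tendsto hcont.tendsto (eventually_nhdsWithin_of_forall hU)

lemma strictlyRhoRecurrent_and_specRadius_lt_one_of_Ufun (hW : IsTransProb W) (hirr : Irred W)
    (x : S) {R : ℝ} (hR : 1 < R) (h1 : Ufun W x x 1 < 1) (hR1 : 1 < Ufun W x x R)
    (hRtop : Ufun W x x R ≠ ∞) :
    StrictlyRhoRecurrent W ∧ specRadius W < 1 := by
  set c := convRadius fun n => kpow W n x x
  have hcont := continuousOn_tsum_ofReal_mul_pow (fun n => hW.fret_nonneg n x x) hRtop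
  obtain ⟨z₂, hz₂U, hz₂⟩ : ∃ z, Ufun W x x z < 1 ∧ z ∈ Set.Ioo 1 R :=
    ((((hcont 1 ⟨zero_le_one, hR.le⟩).continuousAt (Icc_mem_nhds one_pos hR)).tendsto
      |>.eventually_lt_const h1).filter_mono nhdsWithin_le_nhds |>.and (Ioo_mem_nhdsGT hR)).exists
  obtain ⟨z₁, hz₁U, hz₁⟩ : ∃ z, 1 < Ufun W x x z ∧ z ∈ Set.Ioo 0 R :=
    ((lowerSemicontinuous_tsum_ofReal_mul_pow _ R 1 hR1).filter_mono nhdsWithin_le_nhds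
      |>.and (Ioo_mem_nhdsLT (by linarith))).exists
  have hc₂ : ENNReal.ofReal z₂ ≤ c := le_convRadius (fun n => hW.kpow_nonneg n x x)
    (by linarith [hz₂.1]) ((hW.green_self_eq_top_iff x (by linarith [hz₂.1])).not.2 hz₂U.not_ge)
  have hc₁ : c ≤ ENNReal.ofReal z₁ := convRadius_le (fun n => hW.kpow_nonneg n x x) hz₁.1.le
    ((hW.green_self_eq_top_iff x hz₁.1.le).2 hz₁U.le)
  have hcR : c < ENNReal.ofReal R :=
    hc₁.trans_lt ((ENNReal.ofReal_lt_ofReal_iff (by linarith)).2 hz₁.2)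
  have hρ : specRadius W = c.toReal⁻¹ := hW.specRadius_eq hirr x
  have hr1 : 1 < c.toReal := hz₂.1.trans_le ((ENNReal.ofReal_le_iff_le_toReal hcR.ne_top).1 hc₂)
  refine ⟨⟨hW.rhoRecurrent_of_green_eq_top hirr (x := x) ?_, x, ?_⟩, ?_⟩
  · rw [hρ, inv_inv]
    exact hW.green_toReal_convRadius_eq_top x hcR hRtop
  · rw [hρ, inv_inv, ENNReal.ofReal_toReal hcR.ne_top]
    exact hcR.trans_le (le_convRadius (fun n => hW.fret_nonneg n x x) (by linarith) hRtop)
  · rw [hρ]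
    exact inv_lt_one_of_one_lt₀ hr1

end IsTransProb

end SpectralRadius

namespace RhoRecurrent

variable {W : S → S → ℝ}

lemma specRadius_pos (hrec : RhoRecurrent W) (x : S) : 0 < specRadius W :=
  (ENNReal.toReal_nonneg : 0 ≤ specRadius W).lt_of_ne' fun h0 =>
    ne_zero_of_green_self_eq_top (hrec x) (inv_eq_zero.2 h0)

lemma convRadius_kpow_eq (hrec : RhoRecurrent W) (hW : IsTransProb W) (hirr : Irred W)
    (x : S) :
    convRadius (fun n => kpow W n x x) = ENNReal.ofReal (specRadius W)⁻¹ := by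
  have hle := convRadius_le (fun n => hW.kpow_nonneg n x x)
    (inv_nonneg.2 ENNReal.toReal_nonneg) (hrec x)
  rw [hW.specRadius_eq hirr x, inv_inv,
    ENNReal.ofReal_toReal (ne_top_of_le_ne_top ENNReal.ofReal_ne_top hle)]

lemma Ufun_lt_one (hrec : RhoRecurrent W) (hW : IsTransProb W) (hirr : Irred W) (x : S)
    {z : ℝ} (hz0 : 0 ≤ z) (hz : z < (specRadius W)⁻¹) : Ufun W x x z < 1 := by
  rw [← not_le, ← hW.green_self_eq_top_iff x hz0]
  intro htop
  have hle := convRadius_le (fun n => hW.kpow_nonneg n x x) hz0 htop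
  rw [hrec.convRadius_kpow_eq hW hirr x, ENNReal.ofReal_le_ofReal_iff hz0] at hle
  exact hle.not_gt hz

lemma Ufun_inv_specRadius (hrec : RhoRecurrent W) (hW : IsTransProb W) (hirr : Irred W)
    (x : S) :
    Ufun W x x (specRadius W)⁻¹ = 1 := by
  have hR : 0 < (specRadius W)⁻¹ := inv_pos.2 (hrec.specRadius_pos x)
  refine le_antisymm (not_lt.1 fun hlt => ?_) ((hW.green_self_eq_top_iff x hR.le).1 (hrec x))
  obtain ⟨z, hz1, hz⟩ := ((lowerSemicontinuous_tsum_ofReal_mul_pow _ _ 1 hlt).filter_mono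
    nhdsWithin_le_nhds |>.and (Ioo_mem_nhdsLT hR)).exists
  exact (hrec.Ufun_lt_one hW hirr x hz.1.le hz.2).not_gt hz1

end RhoRecurrent

section Lazy

variable {P : S → S → ℝ} {κ : ℝ}

lemma lazy_empty (P : S → S → ℝ) (κ : ℝ) : lazy P ∅ κ = P := by
  funext x y
  simp [lazy]

lemma lazy_insert (P : S → S → ℝ) {L : Set S} {a : S} (ha : a ∉ L) (κ : ℝ) :
    lazy P (insert a L) κ = lazy (lazy P L κ) {a} κ := by
  funext x y
  by_cases hxa : x = a
  · subst hxa
    simp [lazy, ha]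
  · by_cases hxL : x ∈ L <;> simp [lazy, hxa, hxL]

lemma isTransProb_lazy_s8 (hP : IsTransProb P) (L : Set S) (hκ0 : 0 ≤ κ) (hκ1 : κ ≤ 1) :
    IsTransProb (lazy P L κ) := by
  refine ⟨fun x y => ?_, fun x => ?_⟩
  · unfold lazy
    have := hP.1 x y
    split_ifs <;> nlinarith
  · by_cases hx : x ∈ L
    · have h := (hasSum_ite_eq x κ).add ((hP.2 x).mul_left (1 - κ))
      rw [mul_one, add_sub_cancel] at h
      convert h using 2 with y
      simp [lazy, hx, eq_comm]
    · exact (funext fun y => if_neg hx : lazy P L κ x = P x) ▸ hP.2 x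

lemma smul_eKernel_le_lazy (hP : IsTransProb P) (L : Set S) (hκ0 : 0 ≤ κ) :
    ENNReal.ofReal (1 - κ) • eKernel P ≤ eKernel (lazy P L κ) := fun x y => by
  simp only [Pi.smul_apply, smul_eq_mul, eKernel, lazy]
  rw [← ENNReal.ofReal_mul' (hP.1 x y)]
  refine ENNReal.ofReal_le_ofReal ?_
  have := hP.1 x y
  split_ifs <;> nlinarith

lemma irred_lazy (hP : IsTransProb P) (hirr : Irred P) (L : Set S) (hκ0 : 0 ≤ κ)
    (hκ1 : κ < 1) : Irred (lazy P L κ) := by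
  intro x y
  obtain ⟨n, hn⟩ := hirr x y
  refine ⟨n, (isTransProb_lazy_s8 hP L hκ0 hκ1.le).kpow_pos_iff.2 fun h0 => ?_⟩
  have hle := ekpow_mono (smul_eKernel_le_lazy hP L hκ0) n x y
  rw [ekpow_smul, h0, nonpos_iff_eq_zero] at hle
  exact mul_ne_zero (pow_ne_zero _ (ENNReal.ofReal_pos.2 (by linarith)).ne')
    (hP.kpow_pos_iff.1 hn) hle

lemma IsTransProb.Ufun_lazy_singleton (hP : IsTransProb P) (a : S) (hκ0 : 0 ≤ κ)
    (hκ1 : κ ≤ 1) {z : ℝ} (hz : 0 ≤ z) :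
    Ufun (lazy P {a} κ) a a z = ENNReal.ofReal (κ * z) + ENNReal.ofReal (1 - κ) * Ufun P a a z := by
  rw [(isTransProb_lazy_s8 hP {a} hκ0 hκ1).Ufun_eq_eUfun a a hz, hP.Ufun_eq_eUfun a a hz]
  refine eUfun_self_eq_of_rows_eq (fun v hv => ?_) (fun v => ?_)
  · funext w
    simp [eKernel, lazy, hv]
  · simp only [Pi.smul_apply, smul_eq_mul, eKernel, lazy, Set.mem_singleton_iff, if_true]
    have := hP.1 a v
    split_ifs
    · rw [← ENNReal.ofReal_mul hz, ← ENNReal.ofReal_mul hz, ← ENNReal.ofReal_mul (by linarith),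
        ← ENNReal.ofReal_add (by positivity) (by positivity)]
      congr 1
      ring
    · rw [zero_add, zero_add, ← ENNReal.ofReal_mul hz, ← ENNReal.ofReal_mul hz,
        ← ENNReal.ofReal_mul (by linarith)]
      congr 1
      ring

namespace RhoRecurrent

lemma strictlyRhoRecurrent_and_specRadius_lt_one_lazy_singleton (hrec : RhoRecurrent P)
    (hP : IsTransProb P) (hirr : Irred P) (hρ : specRadius P < 1) (a : S) (hκ0 : 0 < κ)
    (hκ1 : κ < 1) :
    StrictlyRhoRecurrent (lazy P {a} κ) ∧ specRadius (lazy P {a} κ) < 1 := by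
  have hR : 1 < (specRadius P)⁻¹ := (one_lt_inv₀ (hrec.specRadius_pos a)).2 hρ
  have hU := fun z (hz : 0 ≤ z) => hP.Ufun_lazy_singleton a hκ0.le hκ1.le hz
  have hUR : Ufun (lazy P {a} κ) a a (specRadius P)⁻¹
      = ENNReal.ofReal (κ * (specRadius P)⁻¹ + (1 - κ)) := by
    rw [hU _ (by linarith), hrec.Ufun_inv_specRadius hP hirr a, mul_one,
      ENNReal.ofReal_add (by positivity) (by linarith)]
  refine (isTransProb_lazy_s8 hP {a} hκ0.le hκ1.le).strictlyRhoRecurrent_and_specRadius_lt_one_of_Ufun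
    (irred_lazy hP hirr {a} hκ0.le hκ1) a hR ?_ ?_ (hUR ▸ ENNReal.ofReal_ne_top)
  · calc Ufun (lazy P {a} κ) a a 1
        = ENNReal.ofReal κ + ENNReal.ofReal (1 - κ) * Ufun P a a 1 := by
          rw [hU 1 zero_le_one, mul_one]
      _ < ENNReal.ofReal κ + ENNReal.ofReal (1 - κ) * 1 :=
        ENNReal.add_lt_add_left ENNReal.ofReal_ne_top <| ENNReal.mul_lt_mul_right
          (ENNReal.ofReal_pos.2 (by linarith)).ne' ENNReal.ofReal_ne_top
          (hrec.Ufun_lt_one hP hirr a zero_le_one hR)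
      _ = 1 := by
          rw [mul_one, ← ENNReal.ofReal_add hκ0.le (by linarith), add_sub_cancel,
            ENNReal.ofReal_one]
  · rw [hUR, ENNReal.one_lt_ofReal]
    nlinarith

lemma rhoRecurrent_and_specRadius_lt_one_lazy (hrec : RhoRecurrent P) (hP : IsTransProb P)
    (hirr : Irred P) (hρ : specRadius P < 1) (hκ0 : 0 < κ) (hκ1 : κ < 1) {L : Set S}
    (hL : L.Finite) : RhoRecurrent (lazy P L κ) ∧ specRadius (lazy P L κ) < 1 := by
  induction L, hL using Set.Finite.induction_on with
  | empty =>
    rw [lazy_empty]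
    exact ⟨hrec, hρ⟩
  | @insert a L ha _ ih =>
    rw [lazy_insert P ha]
    obtain ⟨⟨hrec', -⟩, hρ'⟩ := ih.1.strictlyRhoRecurrent_and_specRadius_lt_one_lazy_singleton
      (isTransProb_lazy_s8 hP L hκ0.le hκ1.le) (irred_lazy hP hirr L hκ0.le hκ1) ih.2 a hκ0 hκ1
    exact ⟨hrec', hρ'⟩

end RhoRecurrent

end Lazy

theorem lazy_strictlyRhoRecurrent_of_rhoRecurrent_general {S : Type*} (P : S → S → ℝ)
    (hP : IsTransProb P) (hirr : Irred P)
    (L : Set S) (hρ : specRadius P < 1) (hLne : L.Nonempty) (hLfin : L.Finite)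
    (hrec : RhoRecurrent P) :
    ∀ κ ∈ Set.Ioo (0 : ℝ) 1, StrictlyRhoRecurrent (lazy P L κ) := by
  rintro κ ⟨hκ0, hκ1⟩
  obtain ⟨a, ha⟩ := hLne
  obtain ⟨hrec', hρ'⟩ :=
    hrec.rhoRecurrent_and_specRadius_lt_one_lazy hP hirr hρ hκ0 hκ1 (hLfin.sdiff (t := {a}))
  rw [← Set.insert_eq_of_mem ha, ← Set.insert_sdiff_singleton, lazy_insert P (fun h => h.2 rfl)]
  exact (hrec'.strictlyRhoRecurrent_and_specRadius_lt_one_lazy_singleton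
    (isTransProb_lazy_s8 hP _ hκ0.le hκ1.le) (irred_lazy hP hirr _ hκ0.le hκ1) hρ' a hκ0 hκ1).1

theorem lazy_strictlyRhoRecurrent_of_rhoRecurrent {S : Type*} [Countable S] [Infinite S] (P : S → S → ℝ)
    (hP : IsTransProb P) (hirr : Irred P)
    (L : Set S) (hρ : specRadius P < 1) (hLne : L.Nonempty) (hLfin : L.Finite)
    (hrec : RhoRecurrent P) :
    ∀ κ ∈ Set.Ioo (0 : ℝ) 1, StrictlyRhoRecurrent (lazy P L κ) :=
  lazy_strictlyRhoRecurrent_of_rhoRecurrent_general P hP hirr L hρ hLne hLfin hrec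
end

section
/- Let x ∈ S and κ ∈ [0,1). Then the radius of convergence of the U-function of the ({x},κ)-lazy version of P at (x,x) equals that of P: r(U^{{x}}_κ|x,x) = r(U|x,x). -/
open scoped Classical ENNReal NNReal

variable {S : Type*}

private lemma fret_lazy_away {S : Type*} (P : S → S → ℝ) (x : S) (κ : ℝ) :
    ∀ n : ℕ, ∀ w, w ≠ x → fret (lazy P {x} κ) n w x = fret P n w x := by
  intro n
  induction n with
  | zero => intro w _; simp [fret]
  | succ m ih =>
    cases m with
    | zero =>
      intro w hw
      show lazy P {x} κ w x = P w x
      simp [lazy, hw]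
    | succ k =>
      intro w hw
      show (∑' v, if v = x then 0 else lazy P {x} κ w v * fret (lazy P {x} κ) (k+1) v x)
          = ∑' v, if v = x then 0 else P w v * fret P (k+1) v x
      refine tsum_congr fun v => ?_
      by_cases hv : v = x
      · simp [hv]
      · simp only [hv, if_false]
        rw [ih v hv]
        congr 1
        simp [lazy, hw]

private lemma fret_lazy_at {S : Type*} (P : S → S → ℝ) (x : S) (κ : ℝ) :
    ∀ n : ℕ, fret (lazy P {x} κ) n x x
      = (1 - κ) * fret P n x x + (if n = 1 then κ else 0) := by
  intro n
  match n with
  | 0 => simp [fret]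
  | 1 =>
    show lazy P {x} κ x x = (1 - κ) * P x x + κ
    simp [lazy]; ring
  | (k+2) =>
    show (∑' v, if v = x then 0 else lazy P {x} κ x v * fret (lazy P {x} κ) (k+1) v x)
        = (1 - κ) * (∑' v, if v = x then 0 else P x v * fret P (k+1) v x) + _
    rw [← tsum_mul_left]
    rw [if_neg (by omega : ¬ (k+2 = 1)), add_zero]
    refine tsum_congr fun v => ?_
    by_cases hv : v = x
    · simp [hv]
    · simp only [hv, if_false]
      rw [fret_lazy_away P x κ (k+1) v hv]
      have : lazy P {x} κ x v = (1 - κ) * P x v := by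
        simp [lazy, if_neg (fun h : x = v => hv h.symm)]
      rw [this]; ring

theorem rU_singleton_lazy {S : Type*} [Countable S] [Infinite S] (P : S → S → ℝ)
    (hP : IsTransProb P) (hirr : Irred P)
    (x : S) (κ : ℝ) (hκ : κ ∈ Set.Ico (0 : ℝ) 1) :
    rU (lazy P {x} κ) x x = rU P x x := by
  have hc : (1 : ℝ) - κ ≠ 0 := by linarith [hκ.2]
  unfold rU convRadius
  refine iSup_congr fun z => ?_
  have key : (Summable fun n => fret (lazy P {x} κ) n x x * (z : ℝ) ^ n)
      ↔ Summable fun n => fret P n x x * (z : ℝ) ^ n := by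
    have hg : Summable (fun n : ℕ => (if n = 1 then κ else 0) * (z : ℝ) ^ n) := by
      apply summable_of_ne_finset_zero (s := {1})
      intro n hn
      simp only [Finset.mem_singleton] at hn
      simp [hn]
    have heq : (fun n => fret (lazy P {x} κ) n x x * (z : ℝ) ^ n)
        = fun n => (1 - κ) * (fret P n x x * (z : ℝ) ^ n)
            + (if n = 1 then κ else 0) * (z : ℝ) ^ n := by
      funext n
      rw [fret_lazy_at P x κ n]; ring
    rw [heq]
    constructor
    · intro h
      have := h.sub hg
      simp only [add_sub_cancel_right] at this
      exact (summable_mul_left_iff hc).mp this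
    · intro h
      exact (h.mul_left _).add hg
  exact iSup_congr_Prop key fun _ => rfl
end
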